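/- Let T : ℝ^n → ℝ^n be nonexpansive, x⋆ a fixed point of T, λ ∈ (0,1), κ > 0, and let r₀, r_v ≥ 0 be such that T is metrically sub-regular with constant κ on the closed ball B of radius r₀ + r_v about x⋆: dist(x, fix T) ≤ κ‖x − T x‖ for all x ∈ B. Then for every x^0 with ‖x^0 − x⋆‖ ≤ r₀ and every sequence (v^t) with ∑_{t=0}^∞ ‖v^t‖ ≤ r_v, the iterates of x^{t+1} = x^t + λ(T(x^t) − x^t) + v^t remain in B for all t, and there exists a constant ν ≥ 0 such that for all t ∈ ℕ, dist²(x^{t+1}, fix T) ≤ ζ · dist²(x^t, fix T) + ν‖v^t‖, where ζ = κ²/(κ² + λ(1−λ)) ∈ (0,1). -/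
import Mathlib

set_option maxHeartbeats 1000000

lemma km_identity {E : Type*} [NormedAddCommGroup E] [InnerProductSpace ℝ E]
    (lam : ℝ) (u w : E) :
    ‖(1 - lam) • u + lam • w‖ ^ 2
      = (1 - lam) * ‖u‖ ^ 2 + lam * ‖w‖ ^ 2 - lam * (1 - lam) * ‖u - w‖ ^ 2 := by
  simp only [norm_add_sq_real, norm_sub_sq_real, norm_smul,
    real_inner_smul_left, real_inner_smul_right, mul_pow, sq_abs, Real.norm_eq_abs]
  ring

/-- Local linear convergence, up to a vanishing bias term, of the
inexact Krasnosel'skii–Mann iteration under metric sub-regularity on the ball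
`B = closedBall x⋆ (r₀ + r_v)`: the iterates remain in `B` and there exists `ν ≥ 0`
such that `dist²(x^{t+1}, fix T) ≤ ζ dist²(x^t, fix T) + ν ‖v^t‖` with
`ζ = κ²/(κ² + λ(1-λ)) ∈ (0,1)`. -/
theorem inexact_KM_local_linear_convergence
    {n : ℕ} (T : EuclideanSpace ℝ (Fin n) → EuclideanSpace ℝ (Fin n))
    (hT : ∀ x y, ‖T x - T y‖ ≤ ‖x - y‖)
    (xstar : EuclideanSpace ℝ (Fin n)) (hxstar : T xstar = xstar)
    (lam : ℝ) (hlam0 : 0 < lam) (hlam1 : lam < 1)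
    (κ : ℝ) (hκ : 0 < κ)
    (r₀ rv : ℝ) (hr₀ : 0 ≤ r₀) (hrv : 0 ≤ rv)
    (hreg : ∀ x ∈ Metric.closedBall xstar (r₀ + rv),
      Metric.infDist x {p | T p = p} ≤ κ * ‖x - T x‖)
    (v : ℕ → EuclideanSpace ℝ (Fin n))
    (hv : Summable fun t => ‖v t‖) (hvsum : ∑' t, ‖v t‖ ≤ rv)
    (x : ℕ → EuclideanSpace ℝ (Fin n))
    (hx0 : ‖x 0 - xstar‖ ≤ r₀)
    (hx : ∀ t, x (t + 1) = x t + lam • (T (x t) - x t) + v t) :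
    κ ^ 2 / (κ ^ 2 + lam * (1 - lam)) ∈ Set.Ioo (0 : ℝ) 1 ∧
      (∀ t : ℕ, x t ∈ Metric.closedBall xstar (r₀ + rv)) ∧
      ∃ ν : ℝ, 0 ≤ ν ∧ ∀ t : ℕ,
        Metric.infDist (x (t + 1)) {p | T p = p} ^ 2 ≤
          κ ^ 2 / (κ ^ 2 + lam * (1 - lam)) *
            Metric.infDist (x t) {p | T p = p} ^ 2 + ν * ‖v t‖ := by
  set S : Set (EuclideanSpace ℝ (Fin n)) := {p | T p = p} with hS
  set a : ℝ := lam * (1 - lam) with ha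
  have ha0 : 0 < a := mul_pos hlam0 (by linarith)
  have hκ2 : 0 < κ ^ 2 := by positivity
  have hden : 0 < κ ^ 2 + a := by linarith
  have hζ : κ ^ 2 / (κ ^ 2 + a) ∈ Set.Ioo (0 : ℝ) 1 := by
    constructor
    · positivity
    · rw [div_lt_one hden]; linarith
  -- S is closed and nonempty
  have hxstarS : xstar ∈ S := hxstar
  have hTcont : Continuous T := by
    have h : LipschitzWith 1 T := LipschitzWith.of_dist_le_mul fun p q => by
      simpa [dist_eq_norm] using hT p q
    exact h.continuous
  have hSclosed : IsClosed S := isClosed_eq hTcont continuous_id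
  -- one exact KM step is nonexpansive towards any fixed point
  have hstep : ∀ t (p : EuclideanSpace ℝ (Fin n)), T p = p →
      x t + lam • (T (x t) - x t) - p
        = (1 - lam) • (x t - p) + lam • (T (x t) - p) := by
    intro t p hp
    module
  have hstepnorm : ∀ t (p : EuclideanSpace ℝ (Fin n)), T p = p →
      ‖x t + lam • (T (x t) - x t) - p‖ ≤ ‖x t - p‖ := by
    intro t p hp
    rw [hstep t p hp]
    calc ‖(1 - lam) • (x t - p) + lam • (T (x t) - p)‖
        ≤ ‖(1 - lam) • (x t - p)‖ + ‖lam • (T (x t) - p)‖ := norm_add_le _ _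
      _ = (1 - lam) * ‖x t - p‖ + lam * ‖T (x t) - p‖ := by
          rw [norm_smul, norm_smul, Real.norm_eq_abs, Real.norm_eq_abs,
            abs_of_pos (by linarith : (0:ℝ) < 1 - lam), abs_of_pos hlam0]
      _ ≤ (1 - lam) * ‖x t - p‖ + lam * ‖x t - p‖ := by
          have := hT (x t) p
          rw [hp] at this
          nlinarith
      _ = ‖x t - p‖ := by ring
  -- iterates remain in the ball
  have hball' : ∀ t, ‖x t - xstar‖ ≤ r₀ + ∑ s ∈ Finset.range t, ‖v s‖ := by
    intro t
    induction t with
    | zero => simpa using hx0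
    | succ t ih =>
        have h1 : ‖x (t + 1) - xstar‖ ≤ ‖x t + lam • (T (x t) - x t) - xstar‖ + ‖v t‖ := by
          have : x (t + 1) - xstar = (x t + lam • (T (x t) - x t) - xstar) + v t := by
            rw [hx t]; abel
          rw [this]; exact norm_add_le _ _
        have h2 := hstepnorm t xstar hxstar
        rw [Finset.sum_range_succ]
        linarith
  have hsum_le : ∀ t, ∑ s ∈ Finset.range t, ‖v s‖ ≤ rv := fun t =>
    le_trans (Summable.sum_le_tsum (Finset.range t) (fun i _ => norm_nonneg _) hv) hvsum
  have hball : ∀ t, x t ∈ Metric.closedBall xstar (r₀ + rv) := by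
    intro t
    rw [Metric.mem_closedBall, dist_eq_norm]
    exact le_trans (hball' t) (by linarith [hsum_le t])
  have hvle : ∀ t, ‖v t‖ ≤ rv :=
    fun t => le_trans (Summable.le_tsum hv t (fun i _ => norm_nonneg _)) hvsum
  refine ⟨hζ, hball, ⟨2 * (r₀ + rv) + rv, by positivity, ?_⟩⟩
  intro t
  set y : EuclideanSpace ℝ (Fin n) := x t with hy
  set y' : EuclideanSpace ℝ (Fin n) := x t + lam • (T (x t) - x t) with hy'
  obtain ⟨p, hpS, hpd⟩ := hSclosed.exists_infDist_eq_dist ⟨xstar, hxstarS⟩ y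
  have hpfix : T p = p := hpS
  -- Fejér-type inequality at p
  have hdecomp : y' - p = (1 - lam) • (y - p) + lam • (T y - p) := hstep t p hpfix
  have hkm : ‖y' - p‖ ^ 2 ≤ ‖y - p‖ ^ 2 - a * ‖y - T y‖ ^ 2 := by
    rw [hdecomp, km_identity]
    have h2 : ‖T y - p‖ ≤ ‖y - p‖ := by
      have := hT y p; rwa [hpfix] at this
    have h3 : (y - p) - (T y - p) = y - T y := by abel
    rw [h3, ha]
    nlinarith [mul_le_mul_of_nonneg_left
      (pow_le_pow_left₀ (norm_nonneg (T y - p)) h2 2) hlam0.le]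
  -- sub-regularity
  have hd : Metric.infDist y S ≤ κ * ‖y - T y‖ := hreg y (hball t)
  have hdsq : Metric.infDist y S ^ 2 ≤ κ ^ 2 * ‖y - T y‖ ^ 2 := by
    nlinarith [Metric.infDist_nonneg (x := y) (s := S), norm_nonneg (y - T y), hκ.le]
  -- dist(y')² ≤ ζ dist(y)²
  have hyd : Metric.infDist y S = ‖y - p‖ := by rw [hpd, dist_eq_norm]
  have hy'le : Metric.infDist y' S ≤ ‖y' - p‖ := by
    rw [← dist_eq_norm]; exact Metric.infDist_le_dist_of_mem hpS
  have hy'sq : Metric.infDist y' S ^ 2 ≤ Metric.infDist y S ^ 2 - a * ‖y - T y‖ ^ 2 := by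
    have h4 : Metric.infDist y' S ^ 2 ≤ ‖y' - p‖ ^ 2 :=
      pow_le_pow_left₀ Metric.infDist_nonneg hy'le 2
    rw [hyd]
    linarith [hkm]
  have hkey : Metric.infDist y' S ^ 2 ≤ κ ^ 2 / (κ ^ 2 + a) * Metric.infDist y S ^ 2 := by
    rw [div_mul_eq_mul_div, le_div_iff₀ hden]
    nlinarith [mul_le_mul_of_nonneg_right hy'sq hden.le,
      mul_le_mul_of_nonneg_left hdsq ha0.le,
      mul_nonneg (mul_nonneg ha0.le ha0.le) (pow_nonneg (norm_nonneg (y - T y)) 2)]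
  -- from y' to x(t+1)
  have hx1 : x (t + 1) = y' + v t := by rw [hx t]
  have htri : Metric.infDist (x (t + 1)) S ≤ Metric.infDist y' S + ‖v t‖ := by
    rw [hx1]
    have h := Metric.infDist_le_infDist_add_dist (x := y' + v t) (y := y') (s := S)
    simpa [dist_eq_norm, add_sub_cancel_left] using h
  have hy'bound : Metric.infDist y' S ≤ r₀ + rv := by
    calc Metric.infDist y' S ≤ ‖y' - xstar‖ := by
          rw [← dist_eq_norm]; exact Metric.infDist_le_dist_of_mem hxstarS
      _ ≤ ‖y - xstar‖ := hstepnorm t xstar hxstar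
      _ ≤ r₀ + rv := by
          have := hball t
          rwa [Metric.mem_closedBall, dist_eq_norm] at this
  have hfinal : Metric.infDist (x (t + 1)) S ^ 2
      ≤ Metric.infDist y' S ^ 2 + (2 * (r₀ + rv) + rv) * ‖v t‖ := by
    nlinarith [Metric.infDist_nonneg (x := x (t + 1)) (s := S),
      Metric.infDist_nonneg (x := y') (s := S), norm_nonneg (v t), hvle t, hy'bound]
  calc Metric.infDist (x (t + 1)) S ^ 2
      ≤ Metric.infDist y' S ^ 2 + (2 * (r₀ + rv) + rv) * ‖v t‖ := hfinal
    _ ≤ κ ^ 2 / (κ ^ 2 + a) * Metric.infDist y S ^ 2 + (2 * (r₀ + rv) + rv) * ‖v t‖ := by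
        linarith [hkey]
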